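/- Let Gt = (V, E, {f_v}) be a general threshold instance whose underlying graph G = (V, E) is a directed acyclic graph. Then there exist a general threshold instance Gt' = (V', E', {f̂_v}) whose underlying graph is a layered graph, an injection ι : V → V', and a subset T ⊆ V' such that: (ii) for every k ≥ 1, if every f_v is AD-k then every f̂_v is AD-k; and (iii) for every seed set S ⊆ V, σ(S) = ∑_{u ∈ V} P_u(S) = ∑_{u ∈ T} P'_u(ι(S)), where P_u and P'_u denote the activation probabilities in Gt and Gt' respectively. -/
import Mathlib


open MeasureTheory Finset
open scoped Classical

noncomputable section


/-- The difference of a set function `f` over a set `A`, evaluated at `S`: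
`Δ_A f(S) = ∑_{B ⊆ A} (-1)^{|B|} f(S ∪ (A \ B))`. -/
def adDiff {V : Type*} [DecidableEq V] (f : Finset V → ℝ) (A S : Finset V) : ℝ :=
  ∑ B ∈ A.powerset, (-1 : ℝ) ^ B.card * f (S ∪ (A \ B))

/-- A set function `f : 2^V → ℝ` is AD-`k` if `(-1)^{|A|+1} Δ_A f(S) ≥ 0` for every
nonempty `A` with `|A| ≤ k` and every `S`. -/
def IsADk {V : Type*} [DecidableEq V] (f : Finset V → ℝ) (k : ℕ) : Prop :=
  ∀ A S : Finset V, A.Nonempty → A.card ≤ k →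
    0 ≤ (-1 : ℝ) ^ (A.card + 1) * adDiff f A S



/-- A general threshold instance on a finite directed graph `(V, E)`:
each node `v` has a threshold function `f v : 2^V → [0,1]` that is monotone,
vanishes on `∅`, and depends only on the in-neighbors of `v`. -/
structure GTInstance (V : Type*) [Fintype V] [DecidableEq V] where
  E : V → V → Prop
  f : V → Finset V → ℝ
  f_nonneg : ∀ v S, 0 ≤ f v S
  f_le_one : ∀ v S, f v S ≤ 1
  f_mono : ∀ v, Monotone (f v)
  f_empty : ∀ v, f v ∅ = 0
  f_local : ∀ v S, f v S = f v (S.filter fun u => E u v)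

variable {V : Type*} [Fintype V] [DecidableEq V]

/-- The deterministic cascade for threshold vector `θ` and seed set `S`:
`C_0 = S`, `C_{t+1} = C_t ∪ {v : f_v(C_t) ≥ θ_v}`. -/
def cascade (gt : GTInstance V) (θ : V → ℝ) (S : Finset V) : ℕ → Finset V
  | 0 => S
  | t + 1 =>
      cascade gt θ S t ∪ Finset.univ.filter fun v => θ v ≤ gt.f v (cascade gt θ S t)

/-- The final active set of the cascade. -/
def finalSet (gt : GTInstance V) (θ : V → ℝ) (S : Finset V) : Finset V :=
  cascade gt θ S (Fintype.card V)

/-- The uniform (Lebesgue product) probability measure on `[0,1]^V`. -/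
def cubeMeasure (V : Type*) [Fintype V] : Measure (V → ℝ) :=
  Measure.pi fun _ => volume.restrict (Set.Icc 0 1)

/-- `activationProb gt v S` is the probability (over uniform thresholds) that `v`
is active at the end of the diffusion started from seed set `S`. -/
def activationProb (gt : GTInstance V) (v : V) (S : Finset V) : ℝ :=
  (cubeMeasure V {θ | v ∈ finalSet gt θ S}).toReal

/-- The spread function `σ(S) = ∑_{v ∈ V} P_v(S)`. -/
def spread (gt : GTInstance V) (S : Finset V) : ℝ :=
  ∑ v : V, activationProb gt v S

/-- The underlying graph is a layered graph with `m ≥ 2` layers (layer indices `1, …, m`),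
all edges going from a node of layer `i+1` to a node of layer `i`. -/
def IsLayered (gt : GTInstance V) (m : ℕ) (layer : V → ℕ) : Prop :=
  2 ≤ m ∧ (∀ v, 1 ≤ layer v ∧ layer v ≤ m) ∧
    ∀ u v, gt.E u v → layer u = layer v + 1

/-- The underlying graph is a directed acyclic graph (no directed cycles). -/
def IsDAG (gt : GTInstance V) : Prop := ∀ v, ¬ Relation.TransGen gt.E v v


section AuxAD

variable {X : Type*} [DecidableEq X]

lemma adDiff_empty (f : Finset X → ℝ) (S : Finset X) : adDiff f ∅ S = f S := by
  simp [adDiff]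

lemma adDiff_insert (f : Finset X → ℝ) {a : X} {A : Finset X} (ha : a ∉ A) (S : Finset X) :
    adDiff f (insert a A) S = adDiff f A (S ∪ {a}) - adDiff f A S := by
  unfold adDiff
  rw [Finset.sum_powerset_insert ha]
  have h1 : ∀ B ∈ A.powerset, (-1:ℝ)^B.card * f (S ∪ (insert a A \ B))
      = (-1:ℝ)^B.card * f ((S ∪ {a}) ∪ (A \ B)) := by
    intro B hB
    have haB : a ∉ B := fun h => ha (Finset.mem_powerset.1 hB h)
    congr 2
    ext x
    have hxa : x = a → x ∉ B := fun h => h ▸ haB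
    simp only [Finset.mem_union, Finset.mem_sdiff, Finset.mem_insert, Finset.mem_singleton]
    tauto
  have h2 : ∀ B ∈ A.powerset, (-1:ℝ)^(insert a B).card * f (S ∪ (insert a A \ insert a B))
      = -((-1:ℝ)^B.card * f (S ∪ (A \ B))) := by
    intro B hB
    have haB : a ∉ B := fun h => ha (Finset.mem_powerset.1 hB h)
    have hset : insert a A \ insert a B = A \ B := by
      ext x
      have hxa : x ∈ A → x ≠ a := fun h h' => ha (h' ▸ h)
      simp only [Finset.mem_sdiff, Finset.mem_insert, not_or]
      tauto
    rw [hset, Finset.card_insert_of_notMem haB, pow_succ]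
    ring
  rw [Finset.sum_congr rfl h1, Finset.sum_congr rfl h2, Finset.sum_neg_distrib,
    sub_eq_add_neg]

lemma adDiff_of_not_depends (f : Finset X → ℝ) {a : X}
    (hf : ∀ Y, f (insert a Y) = f Y) {A : Finset X} (ha : a ∈ A) (S : Finset X) :
    adDiff f A S = 0 := by
  have h := adDiff_insert f (Finset.notMem_erase a A) S
  rw [Finset.insert_erase ha] at h
  rw [h]
  have heq : adDiff f (A.erase a) (S ∪ {a}) = adDiff f (A.erase a) S := by
    unfold adDiff
    refine Finset.sum_congr rfl fun B _ => ?_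
    have : (S ∪ {a}) ∪ (A.erase a \ B) = insert a (S ∪ (A.erase a \ B)) := by
      ext x; simp only [Finset.mem_union, Finset.mem_insert, Finset.mem_singleton]; tauto
    rw [this, hf]
  rw [heq, sub_self]

lemma isADk_indicator (w0 : X) (k : ℕ) :
    IsADk (fun Y : Finset X => if w0 ∈ Y then (1:ℝ) else 0) k := by
  intro A S hA hk
  by_cases hex : ∃ a ∈ A, a ≠ w0
  · obtain ⟨a, haA, hane⟩ := hex
    rw [adDiff_of_not_depends _ (fun Y => by simp [Finset.mem_insert, hane.symm]) haA, mul_zero]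
  · push_neg at hex
    obtain ⟨a, haA⟩ := hA
    have hAw : A = {w0} := by
      apply Finset.eq_singleton_iff_unique_mem.2
      exact ⟨hex a haA ▸ haA, fun b hb => hex b hb⟩
    subst hAw
    have h1 : ({w0} : Finset X) = insert w0 ∅ := rfl
    rw [h1, adDiff_insert _ (Finset.notMem_empty w0), adDiff_empty, adDiff_empty]
    by_cases h : w0 ∈ S <;> simp [h]

lemma isADk_zero (k : ℕ) : IsADk (fun _ : Finset X => (0:ℝ)) k := by
  intro A S _ _
  simp [adDiff]

lemma adDiff_comp {W : Type*} [DecidableEq W] [Fintype X]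
    (σ : X → W) (hσ : Function.Injective σ) (g : Finset X → ℝ) (A : Finset W) :
    ∀ S : Finset W,
      adDiff (fun Y => g (Finset.univ.filter fun u => σ u ∈ Y)) A S =
      if A ⊆ Finset.univ.image σ then
        adDiff g (Finset.univ.filter fun u => σ u ∈ A) (Finset.univ.filter fun u => σ u ∈ S)
      else 0 := by
  induction A using Finset.induction_on with
  | empty =>
    intro S
    rw [if_pos (Finset.empty_subset _)]
    simp [adDiff_empty]
  | @insert a A haA IH =>
    intro S
    by_cases hmem : a ∈ Finset.univ.image σ
    · obtain ⟨u0, -, hu0⟩ := Finset.mem_image.1 hmem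
      by_cases hA : A ⊆ Finset.univ.image σ
      · rw [if_pos (Finset.insert_subset hmem hA)]
        rw [adDiff_insert _ haA, IH, IH, if_pos hA, if_pos hA]
        have hu0nm : u0 ∉ Finset.univ.filter fun u => σ u ∈ A := by
          simp only [Finset.mem_filter, Finset.mem_univ, true_and]
          rw [hu0]; exact haA
        have hins : (Finset.univ.filter fun u => σ u ∈ insert a A)
            = insert u0 (Finset.univ.filter fun u => σ u ∈ A) := by
          ext x
          simp only [Finset.mem_filter, Finset.mem_univ, true_and, Finset.mem_insert]
          constructor
          · rintro (h | h)
            · exact Or.inl (hσ (hu0 ▸ h))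
            · exact Or.inr h
          · rintro (rfl | h)
            · exact Or.inl hu0
            · exact Or.inr h
        have hS : (Finset.univ.filter fun u => σ u ∈ S ∪ {a})
            = (Finset.univ.filter fun u => σ u ∈ S) ∪ {u0} := by
          ext x
          simp only [Finset.mem_filter, Finset.mem_univ, true_and, Finset.mem_union,
            Finset.mem_singleton]
          constructor
          · rintro (h | h)
            · exact Or.inl h
            · exact Or.inr (hσ (hu0 ▸ h))
          · rintro (h | rfl)
            · exact Or.inl h
            · exact Or.inr hu0
        rw [hins, hS, adDiff_insert g (by simpa using hu0nm)]
      · have h1 : ¬ insert a A ⊆ Finset.univ.image σ := by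
          intro h; exact hA ((Finset.subset_insert a A).trans h)
        rw [if_neg h1, adDiff_insert _ haA, IH, IH, if_neg hA, if_neg hA, sub_self]
    · have h1 : ¬ insert a A ⊆ Finset.univ.image σ := by
        intro h; exact hmem (h (Finset.mem_insert_self a A))
      rw [if_neg h1]
      refine adDiff_of_not_depends _ (fun Y => ?_) (Finset.mem_insert_self a A) S
      congr 1
      ext x
      simp only [Finset.mem_filter, Finset.mem_univ, true_and, Finset.mem_insert]
      have : σ x ≠ a := fun h => hmem (h ▸ Finset.mem_image_of_mem σ (Finset.mem_univ x))
      tauto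

lemma isADk_comp {W : Type*} [DecidableEq W] [Fintype X] [Fintype W]
    (σ : X → W) (hσ : Function.Injective σ) (g : Finset X → ℝ) (k : ℕ) (hg : IsADk g k) :
    IsADk (fun Y : Finset W => g (Finset.univ.filter fun u => σ u ∈ Y)) k := by
  intro A S hA hk
  rw [adDiff_comp σ hσ g A S]
  split_ifs with h
  · have hcard : (Finset.univ.filter fun u => σ u ∈ A).card = A.card := by
      have himg : (Finset.univ.filter fun u => σ u ∈ A).image σ = A := by
        ext x
        simp only [Finset.mem_image, Finset.mem_filter, Finset.mem_univ, true_and]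
        constructor
        · rintro ⟨u, hu, rfl⟩; exact hu
        · intro hx
          obtain ⟨u, -, rfl⟩ := Finset.mem_image.1 (h hx)
          exact ⟨u, hx, rfl⟩
      calc (Finset.univ.filter fun u => σ u ∈ A).card
          = ((Finset.univ.filter fun u => σ u ∈ A).image σ).card :=
            (Finset.card_image_of_injective _ hσ).symm
        _ = A.card := by rw [himg]
    have hne : (Finset.univ.filter fun u => σ u ∈ A).Nonempty := by
      obtain ⟨a, ha⟩ := hA
      obtain ⟨u, -, rfl⟩ := Finset.mem_image.1 (h ha)
      exact ⟨u, Finset.mem_filter.2 ⟨Finset.mem_univ u, ha⟩⟩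
    have := hg _ (Finset.univ.filter fun u => σ u ∈ S) hne (by omega)
    rwa [hcard] at this
  · simp

end AuxAD
section AuxFP

def IsFixed (gt : GTInstance V) (θ : V → ℝ) (S D : Finset V) : Prop :=
  S ⊆ D ∧ ∀ v, θ v ≤ gt.f v D → v ∈ D

lemma cascade_mono_succ (gt : GTInstance V) (θ : V → ℝ) (S : Finset V) (t : ℕ) :
    cascade gt θ S t ⊆ cascade gt θ S (t + 1) :=
  Finset.subset_union_left

lemma seed_subset_cascade (gt : GTInstance V) (θ : V → ℝ) (S : Finset V) (t : ℕ) :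
    S ⊆ cascade gt θ S t := by
  induction t with
  | zero => exact Finset.Subset.refl S
  | succ t ih => exact ih.trans (cascade_mono_succ gt θ S t)

lemma cascade_subset_of_isFixed {gt : GTInstance V} {θ : V → ℝ} {S D : Finset V}
    (h : IsFixed gt θ S D) : ∀ t, cascade gt θ S t ⊆ D := by
  intro t
  induction t with
  | zero => exact h.1
  | succ t ih =>
    apply Finset.union_subset ih
    intro v hv
    rw [Finset.mem_filter] at hv
    exact h.2 v (hv.2.trans (gt.f_mono v ih))

lemma finalSet_subset_of_isFixed {gt : GTInstance V} {θ : V → ℝ} {S D : Finset V}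
    (h : IsFixed gt θ S D) : finalSet gt θ S ⊆ D :=
  cascade_subset_of_isFixed h _

lemma cascade_stab {gt : GTInstance V} {θ : V → ℝ} {S : Finset V} {t : ℕ}
    (h : cascade gt θ S t = cascade gt θ S (t + 1)) :
    ∀ d, cascade gt θ S (t + d) = cascade gt θ S t := by
  intro d
  induction d with
  | zero => rfl
  | succ d ih =>
    have hdef : cascade gt θ S (t + (d + 1)) = cascade gt θ S (t + d) ∪
        Finset.univ.filter (fun v => θ v ≤ gt.f v (cascade gt θ S (t + d))) := rfl
    rw [hdef, ih]
    exact h.symm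

lemma isFixed_finalSet (gt : GTInstance V) (θ : V → ℝ) (S : Finset V) :
    IsFixed gt θ S (finalSet gt θ S) := by
  have key : cascade gt θ S (Fintype.card V) = cascade gt θ S (Fintype.card V + 1) := by
    by_contra hne
    have hstrict : ∀ t, t ≤ Fintype.card V → cascade gt θ S t ≠ cascade gt θ S (t + 1) := by
      intro t ht heq
      apply hne
      have h1 := cascade_stab heq (Fintype.card V - t)
      have h2 := cascade_stab heq (Fintype.card V + 1 - t)
      rw [show t + (Fintype.card V - t) = Fintype.card V by omega] at h1
      rw [show t + (Fintype.card V + 1 - t) = Fintype.card V + 1 by omega] at h2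
      rw [h1, h2]
    have hcard : ∀ t, t ≤ Fintype.card V + 1 → t ≤ (cascade gt θ S t).card := by
      intro t
      induction t with
      | zero => intro _; omega
      | succ t ih =>
        intro ht
        have hss : cascade gt θ S t ⊂ cascade gt θ S (t + 1) :=
          ⟨cascade_mono_succ gt θ S t, fun h => hstrict t (by omega)
            (Finset.Subset.antisymm (cascade_mono_succ gt θ S t) h)⟩
        have := Finset.card_lt_card hss
        have := ih (by omega)
        omega
    have h1 := hcard (Fintype.card V + 1) le_rfl
    have h2 := Finset.card_le_univ (cascade gt θ S (Fintype.card V + 1))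
    omega
  constructor
  · exact seed_subset_cascade gt θ S _
  · intro v hv
    have : v ∈ cascade gt θ S (Fintype.card V + 1) :=
      Finset.mem_union_right _ (Finset.mem_filter.2 ⟨Finset.mem_univ v, hv⟩)
    rwa [← key] at this

lemma measurableSet_cascade_eq (gt : GTInstance V) (S : Finset V) (t : ℕ) :
    ∀ C : Finset V, MeasurableSet {θ : V → ℝ | cascade gt θ S t = C} := by
  induction t with
  | zero =>
    intro C
    by_cases h : S = C
    · simp only [cascade, h, Set.setOf_true]
      exact MeasurableSet.univ
    · simp only [cascade, h, Set.setOf_false]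
      exact MeasurableSet.empty
  | succ t ih =>
    intro C
    have hdecomp : {θ : V → ℝ | cascade gt θ S (t + 1) = C} =
        ⋃ C' : Finset V, ({θ : V → ℝ | cascade gt θ S t = C'} ∩
          {θ : V → ℝ | C' ∪ Finset.univ.filter (fun v => θ v ≤ gt.f v C') = C}) := by
      ext θ
      simp only [Set.mem_iUnion, Set.mem_inter_iff, Set.mem_setOf_eq]
      constructor
      · intro h
        exact ⟨cascade gt θ S t, rfl, h⟩
      · rintro ⟨C', h1, h2⟩
        show cascade gt θ S t ∪ _ = C
        rw [h1]
        exact h2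
    rw [hdecomp]
    refine MeasurableSet.iUnion fun C' => (ih C').inter ?_
    have h2 : {θ : V → ℝ | C' ∪ Finset.univ.filter (fun v => θ v ≤ gt.f v C') = C} =
        ⋂ v : V, {θ : V → ℝ | v ∈ C ↔ (v ∈ C' ∨ θ v ≤ gt.f v C')} := by
      ext θ
      simp only [Set.mem_iInter, Set.mem_setOf_eq, Finset.ext_iff, Finset.mem_union,
        Finset.mem_filter, Finset.mem_univ, true_and]
      constructor
      · intro h v; exact (h v).symm
      · intro h v; exact (h v).symm
    rw [h2]
    refine MeasurableSet.iInter fun v => ?_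
    by_cases hC : v ∈ C
    · by_cases hC' : v ∈ C'
      · have he : {θ : V → ℝ | v ∈ C ↔ (v ∈ C' ∨ θ v ≤ gt.f v C')} = Set.univ := by
          ext θ; simp [hC, hC']
        rw [he]; exact MeasurableSet.univ
      · have he : {θ : V → ℝ | v ∈ C ↔ (v ∈ C' ∨ θ v ≤ gt.f v C')}
            = {θ : V → ℝ | θ v ≤ gt.f v C'} := by
          ext θ; simp [hC, hC']
        rw [he]; exact measurableSet_le (measurable_pi_apply v) measurable_const
    · by_cases hC' : v ∈ C'
      · have he : {θ : V → ℝ | v ∈ C ↔ (v ∈ C' ∨ θ v ≤ gt.f v C')} = ∅ := by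
          ext θ; simp [hC, hC']
        rw [he]; exact MeasurableSet.empty
      · have he : {θ : V → ℝ | v ∈ C ↔ (v ∈ C' ∨ θ v ≤ gt.f v C')}
            = {θ : V → ℝ | θ v ≤ gt.f v C'}ᶜ := by
          ext θ; simp [hC, hC']
        rw [he]; exact (measurableSet_le (measurable_pi_apply v) measurable_const).compl

lemma measurableSet_mem_finalSet (gt : GTInstance V) (S : Finset V) (v : V) :
    MeasurableSet {θ : V → ℝ | v ∈ finalSet gt θ S} := by
  have h : {θ : V → ℝ | v ∈ finalSet gt θ S} =
      ⋃ C : Finset V, ⋃ (_ : v ∈ C), {θ : V → ℝ | cascade gt θ S (Fintype.card V) = C} := by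
    ext θ
    simp only [Set.mem_iUnion, Set.mem_setOf_eq]
    constructor
    · intro h; exact ⟨finalSet gt θ S, h, rfl⟩
    · rintro ⟨C, hv, hC⟩
      show v ∈ cascade gt θ S (Fintype.card V)
      rw [hC]; exact hv
  rw [h]
  exact MeasurableSet.iUnion fun C => MeasurableSet.iUnion fun _ =>
    measurableSet_cascade_eq gt S _ C

end AuxFP
section AuxMeasure

lemma restrict_Icc_prob : IsProbabilityMeasure (volume.restrict (Set.Icc (0:ℝ) 1)) := by
  constructor
  rw [Measure.restrict_apply MeasurableSet.univ, Set.univ_inter, Real.volume_Icc]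
  norm_num

lemma cubeMeasure_prob (W : Type*) [Fintype W] : IsProbabilityMeasure (cubeMeasure W) := by
  haveI := restrict_Icc_prob
  unfold cubeMeasure
  infer_instance

lemma measurable_comp_apply {X W : Type*} [Fintype X] [Fintype W] (ι : X → W) :
    Measurable (fun θ : W → ℝ => θ ∘ ι) :=
  measurable_pi_lambda _ fun v => measurable_pi_apply (ι v)

lemma cubeMeasure_map_comp {X W : Type*} [Fintype X] [DecidableEq X] [Fintype W]
    [DecidableEq W] (ι : X → W) (hι : Function.Injective ι) :
    (cubeMeasure W).map (fun θ => θ ∘ ι) = cubeMeasure X := by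
  haveI := restrict_Icc_prob
  refine (Measure.pi_eq fun s hs => ?_).symm
  rw [Measure.map_apply (measurable_comp_apply ι) (MeasurableSet.univ_pi hs)]
  classical
  set t : W → Set ℝ := fun w => if h : ∃ v, ι v = w then s h.choose else Set.univ with ht
  have htv : ∀ v, t (ι v) = s v := by
    intro v
    have hex : ∃ u, ι u = ι v := ⟨v, rfl⟩
    have : hex.choose = v := hι hex.choose_spec
    simp only [ht, dif_pos hex, this]
  have hpre : (fun θ : W → ℝ => θ ∘ ι) ⁻¹' Set.pi Set.univ s = Set.pi Set.univ t := by
    ext θ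
    simp only [Set.mem_preimage, Set.mem_pi, Set.mem_univ, forall_true_left, true_implies,
      Function.comp_apply]
    constructor
    · intro h w
      by_cases hex : ∃ v, ι v = w
      · obtain ⟨v, rfl⟩ := hex
        rw [htv]; exact h v
      · simp only [ht, dif_neg hex]; trivial
    · intro h v
      have := h (ι v)
      rwa [htv] at this
  rw [hpre]
  unfold cubeMeasure
  rw [Measure.pi_pi]
  have hprod : ∀ w ∈ Finset.univ, w ∉ Finset.univ.image ι →
      (volume.restrict (Set.Icc (0:ℝ) 1)) (t w) = 1 := by
    intro w _ hw
    have hex : ¬ ∃ v, ι v = w := by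
      intro ⟨v, hv⟩
      exact hw (Finset.mem_image.2 ⟨v, Finset.mem_univ v, hv⟩)
    simp only [ht, dif_neg hex]
    exact measure_univ
  rw [← Finset.prod_subset (Finset.subset_univ (Finset.univ.image ι)) hprod,
    Finset.prod_image (fun a _ b _ h => hι h)]
  exact Finset.prod_congr rfl fun v _ => by rw [htv]

lemma cubeMeasure_coord_null {W : Type*} [Fintype W] (w : W) :
    cubeMeasure W {θ : W → ℝ | θ w ∉ Set.Ioc (0:ℝ) 1} = 0 := by
  classical
  have hset : {θ : W → ℝ | θ w ∉ Set.Ioc (0:ℝ) 1} =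
      Set.pi Set.univ (Function.update (fun _ : W => (Set.univ : Set ℝ)) w (Set.Ioc 0 1)ᶜ) := by
    ext θ
    simp only [Set.mem_setOf_eq, Set.mem_pi, Set.mem_univ, true_implies]
    constructor
    · intro h w'
      by_cases hw' : w' = w
      · subst hw'; rw [Function.update_self]; exact h
      · rw [Function.update_of_ne hw']; trivial
    · intro h
      have := h w
      rwa [Function.update_self] at this
  rw [hset]
  unfold cubeMeasure
  rw [Measure.pi_pi]
  apply Finset.prod_eq_zero (Finset.mem_univ w)
  rw [Function.update_self, Measure.restrict_apply measurableSet_Ioc.compl]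
  have : (Set.Ioc (0:ℝ) 1)ᶜ ∩ Set.Icc 0 1 = {0} := by
    ext x
    simp only [Set.mem_inter_iff, Set.mem_compl_iff, Set.mem_Ioc, Set.mem_Icc,
      Set.mem_singleton_iff, not_and, not_le]
    constructor
    · rintro ⟨h1, h2, h3⟩
      by_contra hx
      have : 0 < x := lt_of_le_of_ne h2 (Ne.symm hx)
      have := h1 this
      linarith
    · rintro rfl
      exact ⟨fun h => absurd h (lt_irrefl 0), le_refl 0, zero_le_one⟩
  rw [this]
  exact Real.volume_singleton

end AuxMeasure
section Construction

def reachLv (gt : GTInstance V) (v : V) : ℕ :=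
  (Finset.univ.filter fun w => Relation.ReflTransGen gt.E v w).card

lemma reachLv_pos (gt : GTInstance V) (v : V) : 1 ≤ reachLv gt v := by
  have : v ∈ Finset.univ.filter fun w => Relation.ReflTransGen gt.E v w :=
    Finset.mem_filter.2 ⟨Finset.mem_univ v, Relation.ReflTransGen.refl⟩
  exact Finset.card_pos.2 ⟨v, this⟩

lemma reachLv_le (gt : GTInstance V) (v : V) : reachLv gt v ≤ Fintype.card V := by
  have := Finset.card_le_univ (Finset.univ.filter fun w => Relation.ReflTransGen gt.E v w)
  simpa [reachLv] using this

lemma reachLv_edge (gt : GTInstance V) (hdag : IsDAG gt) {u v : V} (h : gt.E u v) :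
    reachLv gt v + 1 ≤ reachLv gt u := by
  have hss : (Finset.univ.filter fun w => Relation.ReflTransGen gt.E v w) ⊂
      (Finset.univ.filter fun w => Relation.ReflTransGen gt.E u w) := by
    constructor
    · intro w hw
      rw [Finset.mem_filter] at hw ⊢
      exact ⟨Finset.mem_univ w, (Relation.ReflTransGen.single h).trans hw.2⟩
    · intro hsub
      have hu : u ∈ Finset.univ.filter fun w => Relation.ReflTransGen gt.E u w :=
        Finset.mem_filter.2 ⟨Finset.mem_univ u, Relation.ReflTransGen.refl⟩
      have := (Finset.mem_filter.1 (hsub hu)).2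
      exact hdag v (Relation.TransGen.trans_right this (Relation.TransGen.single h))
  have := Finset.card_lt_card hss
  unfold reachLv
  omega

/-- The successor layer index, capped to stay in `Fin (card V + 2)`. -/
def succIdx (j : Fin (Fintype.card V + 2)) : Fin (Fintype.card V + 2) :=
  ⟨min (j.val + 1) (Fintype.card V + 1), by omega⟩

/-- The threshold function of the layered instance. -/
def gtWf (gt : GTInstance V) (p : V × Fin (Fintype.card V + 2))
    (A : Finset (V × Fin (Fintype.card V + 2))) : ℝ :=
  if p.2.val + 1 = reachLv gt p.1 then
    gt.f p.1 (Finset.univ.filter fun u => (u, succIdx p.2) ∈ A)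
  else if p.2.val + 1 < reachLv gt p.1 then
    (if (p.1, succIdx p.2) ∈ A then 1 else 0)
  else 0

lemma gtWf_real (gt : GTInstance V) {p : V × Fin (Fintype.card V + 2)}
    (h : p.2.val + 1 = reachLv gt p.1) (A : Finset (V × Fin (Fintype.card V + 2))) :
    gtWf gt p A = gt.f p.1 (Finset.univ.filter fun u => (u, succIdx p.2) ∈ A) := by
  unfold gtWf
  rw [if_pos h]

lemma gtWf_relay (gt : GTInstance V) {p : V × Fin (Fintype.card V + 2)}
    (h1 : p.2.val + 1 ≠ reachLv gt p.1) (h2 : p.2.val + 1 < reachLv gt p.1)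
    (A : Finset (V × Fin (Fintype.card V + 2))) :
    gtWf gt p A = (if (p.1, succIdx p.2) ∈ A then 1 else 0) := by
  unfold gtWf
  rw [if_neg h1, if_pos h2]

lemma gtWf_dummy (gt : GTInstance V) {p : V × Fin (Fintype.card V + 2)}
    (h1 : p.2.val + 1 ≠ reachLv gt p.1) (h2 : ¬ p.2.val + 1 < reachLv gt p.1)
    (A : Finset (V × Fin (Fintype.card V + 2))) :
    gtWf gt p A = 0 := by
  unfold gtWf
  rw [if_neg h1, if_neg h2]

/-- The layered general-threshold instance on `V × Fin (card V + 2)`.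
Node `(v, j)` (at layer `j+1`) is: the "real" copy of `v` if `j + 1 = reachLv v`;
a relay carrying `v`'s activation downwards if `j + 1 < reachLv v`; a dummy otherwise. -/
def gtW (gt : GTInstance V) : GTInstance (V × Fin (Fintype.card V + 2)) where
  E p q := p.2.val = q.2.val + 1 ∧
    ((q.2.val + 1 = reachLv gt q.1 ∧ gt.E p.1 q.1) ∨
     (q.2.val + 1 < reachLv gt q.1 ∧ p.1 = q.1))
  f := gtWf gt
  f_nonneg p A := by
    unfold gtWf
    split_ifs
    · exact gt.f_nonneg _ _
    · exact zero_le_one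
    · exact le_refl 0
    · exact le_refl 0
  f_le_one p A := by
    unfold gtWf
    split_ifs
    · exact gt.f_le_one _ _
    · exact le_refl 1
    · exact zero_le_one
    · exact zero_le_one
  f_mono p := by
    intro A B hAB
    unfold gtWf
    by_cases h1 : p.2.val + 1 = reachLv gt p.1
    · rw [if_pos h1, if_pos h1]
      apply gt.f_mono
      intro u hu
      rw [Finset.mem_filter] at hu ⊢
      exact ⟨hu.1, hAB hu.2⟩
    · rw [if_neg h1, if_neg h1]
      by_cases h2 : p.2.val + 1 < reachLv gt p.1
      · rw [if_pos h2, if_pos h2]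
        by_cases hA : (p.1, succIdx p.2) ∈ A
        · rw [if_pos hA, if_pos (hAB hA)]
        · rw [if_neg hA]
          split_ifs <;> norm_num
      · rw [if_neg h2, if_neg h2]
  f_empty p := by
    unfold gtWf
    split_ifs with h1 h2 h3
    · simpa using gt.f_empty p.1
    · exact absurd h3 (Finset.notMem_empty _)
    · rfl
    · rfl
  f_local p A := by
    obtain ⟨v, j⟩ := p
    unfold gtWf
    dsimp only
    by_cases h1 : j.val + 1 = reachLv gt v
    · rw [if_pos h1, if_pos h1]
      have hJ : (succIdx j).val = j.val + 1 := by
        have := reachLv_le gt v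
        simp only [succIdx]
        omega
      rw [gt.f_local v (Finset.univ.filter fun u => (u, succIdx j) ∈ A)]
      congr 1
      ext u
      simp only [Finset.mem_filter, Finset.mem_univ, true_and]
      constructor
      · rintro ⟨hA, hE⟩
        exact ⟨hA, hJ, Or.inl ⟨h1, hE⟩⟩
      · rintro ⟨hA, -, (⟨-, hE⟩ | ⟨hlt, -⟩)⟩
        · exact ⟨hA, hE⟩
        · omega
    · rw [if_neg h1, if_neg h1]
      by_cases h2 : j.val + 1 < reachLv gt v
      · rw [if_pos h2, if_pos h2]
        have hJ : (succIdx j).val = j.val + 1 := by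
          have := reachLv_le gt v
          simp only [succIdx]
          omega
        simp only [Finset.mem_filter]
        split_ifs with hA hB hB
        · rfl
        · exact absurd ⟨hA, hJ, Or.inr ⟨h2, trivial⟩⟩ hB
        · exact absurd hB.1 hA
        · rfl
      · rw [if_neg h2, if_neg h2]

lemma gtW_f_eq (gt : GTInstance V) : (gtW gt).f = gtWf gt := rfl

lemma gtW_layered (gt : GTInstance V) :
    IsLayered (gtW gt) (Fintype.card V + 2) (fun p => p.2.val + 1) := by
  refine ⟨by omega, fun p => ⟨?_, ?_⟩, fun p q h => ?_⟩
  · show 1 ≤ p.2.val + 1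
    omega
  · show p.2.val + 1 ≤ Fintype.card V + 2
    have := p.2.isLt
    omega
  · show p.2.val + 1 = (q.2.val + 1) + 1
    have := h.1
    omega

lemma gtW_adk (gt : GTInstance V) (k : ℕ) (h : ∀ v, IsADk (gt.f v) k)
    (p : V × Fin (Fintype.card V + 2)) : IsADk ((gtW gt).f p) k := by
  rw [gtW_f_eq]
  by_cases h1 : p.2.val + 1 = reachLv gt p.1
  · have hf : gtWf gt p = fun A =>
        gt.f p.1 (Finset.univ.filter fun u => (fun u => (u, succIdx p.2)) u ∈ A) := by
      funext A
      rw [gtWf_real gt h1]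
    rw [hf]
    exact isADk_comp _ (fun a b hab => (Prod.mk.injEq _ _ _ _ ▸ hab).1) _ k (h p.1)
  · by_cases h2 : p.2.val + 1 < reachLv gt p.1
    · have hf : gtWf gt p = fun A =>
          if (p.1, succIdx p.2) ∈ A then (1:ℝ) else 0 := by
        funext A
        rw [gtWf_relay gt h1 h2]
      rw [hf]
      exact isADk_indicator _ k
    · have hf : gtWf gt p = fun _ => (0:ℝ) := by
        funext A
        rw [gtWf_dummy gt h1 h2]
      rw [hf]
      exact isADk_zero k

def iota0 (gt : GTInstance V) (v : V) : V × Fin (Fintype.card V + 2) :=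
  (v, ⟨reachLv gt v - 1, by have := reachLv_le gt v; omega⟩)

lemma iota0_injective (gt : GTInstance V) : Function.Injective (iota0 gt) := by
  intro a b h
  exact (Prod.mk.injEq _ _ _ _ ▸ h).1

end Construction
section Key

lemma key_iff (gt : GTInstance V) (hdag : IsDAG gt) (S : Finset V)
    (θ' : V × Fin (Fintype.card V + 2) → ℝ)
    (hgood : ∀ p : V × Fin (Fintype.card V + 2),
      p.2.val + 1 ≠ reachLv gt p.1 → θ' p ∈ Set.Ioc (0:ℝ) 1)
    (v : V) :
    iota0 gt v ∈ finalSet (gtW gt) θ' (S.image (iota0 gt)) ↔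
      v ∈ finalSet gt (θ' ∘ iota0 gt) S := by
  have hF'fix := isFixed_finalSet (gtW gt) θ' (S.image (iota0 gt))
  have hDfix := isFixed_finalSet gt (θ' ∘ iota0 gt) S
  set F' := finalSet (gtW gt) θ' (S.image (iota0 gt)) with hF'
  set D := finalSet gt (θ' ∘ iota0 gt) S with hD
  -- relays carry activation downwards within F'
  have descend : ∀ d (u : V) (j j' : Fin (Fintype.card V + 2)), (u, j') ∈ F' →
      j'.val = j.val + d → j'.val + 1 ≤ reachLv gt u → (u, j) ∈ F' := by
    intro d
    induction d with
    | zero =>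
      intro u j j' h hj _
      have : j = j' := Fin.ext (by omega)
      rwa [this]
    | succ d ih =>
      intro u j j' h hj hle
      have hjm : j.val + 1 < Fintype.card V + 2 := by have := j'.isLt; omega
      have hstep : (u, (⟨j.val + 1, hjm⟩ : Fin (Fintype.card V + 2))) ∈ F' :=
        ih u ⟨j.val + 1, hjm⟩ j' h (show j'.val = j.val + 1 + d by omega) hle
      apply hF'fix.2 (u, j)
      have hlt : j.val + 1 < reachLv gt u := by omega
      have hne : j.val + 1 ≠ reachLv gt u := by omega
      have hval : (gtW gt).f (u, j) F' = 1 := by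
        rw [gtW_f_eq, gtWf_relay gt hne hlt, if_pos ?hmem]
        case hmem =>
          have hsj : succIdx j = (⟨j.val + 1, hjm⟩ : Fin (Fintype.card V + 2)) := by
            apply Fin.ext
            show min (j.val + 1) (Fintype.card V + 1) = j.val + 1
            omega
          show (u, succIdx j) ∈ F'
          rw [hsj]
          exact hstep
      rw [hval]
      exact (hgood (u, j) hne).2
  -- the set of originals whose real copy is active is a fixed point of gt
  have hE : IsFixed gt (θ' ∘ iota0 gt) S (Finset.univ.filter fun u => iota0 gt u ∈ F') := by
    constructor
    · intro u hu
      exact Finset.mem_filter.2 ⟨Finset.mem_univ u, hF'fix.1 (Finset.mem_image_of_mem _ hu)⟩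
    · intro u hu
      refine Finset.mem_filter.2 ⟨Finset.mem_univ u, ?_⟩
      apply hF'fix.2 (iota0 gt u)
      have hidx : (iota0 gt u).2.val + 1 = reachLv gt u := by
        show reachLv gt u - 1 + 1 = reachLv gt u
        have := reachLv_pos gt u
        omega
      have hfval : (gtW gt).f (iota0 gt u) F'
          = gt.f u (Finset.univ.filter fun x => (x, succIdx (iota0 gt u).2) ∈ F') := by
        rw [gtW_f_eq, gtWf_real gt hidx]
        rfl
      rw [hfval]
      refine le_trans hu ?_
      rw [gt.f_local u (Finset.univ.filter fun x => iota0 gt x ∈ F'),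
        gt.f_local u (Finset.univ.filter fun x => (x, succIdx (iota0 gt u).2) ∈ F')]
      apply gt.f_mono
      intro x hx
      simp only [Finset.mem_filter, Finset.mem_univ, true_and] at hx ⊢
      obtain ⟨hxF, hxu⟩ := hx
      refine ⟨?_, hxu⟩
      have hlv := reachLv_edge gt hdag hxu
      have hJval : (succIdx (iota0 gt u).2).val = reachLv gt u := by
        show min (reachLv gt u - 1 + 1) (Fintype.card V + 1) = reachLv gt u
        have h1 := reachLv_pos gt u
        have h2 := reachLv_le gt u
        omega
      have hx2 : (iota0 gt x).2.val = reachLv gt x - 1 := rfl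
      have hxpos := reachLv_pos gt x
      refine descend (reachLv gt x - 1 - reachLv gt u) x (succIdx (iota0 gt u).2)
        (iota0 gt x).2 hxF ?_ ?_
      · omega
      · omega
  -- the layered image of D is a fixed point of gtW
  set Φ := Finset.univ.filter
      (fun p : V × Fin (Fintype.card V + 2) => p.1 ∈ D ∧ p.2.val + 1 ≤ reachLv gt p.1)
    with hPhidef
  have hPhimem : ∀ p : V × Fin (Fintype.card V + 2),
      p ∈ Φ ↔ (p.1 ∈ D ∧ p.2.val + 1 ≤ reachLv gt p.1) := by
    intro p
    rw [hPhidef]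
    simp only [Finset.mem_filter, Finset.mem_univ, true_and]
  have hPhi : IsFixed (gtW gt) θ' (S.image (iota0 gt)) Φ := by
    constructor
    · intro p hp
      obtain ⟨u, hu, rfl⟩ := Finset.mem_image.1 hp
      refine (hPhimem _).2 ⟨hDfix.1 hu, ?_⟩
      show reachLv gt u - 1 + 1 ≤ reachLv gt u
      have := reachLv_pos gt u
      omega
    · rintro ⟨u, j⟩ h
      by_cases h1 : j.val + 1 = reachLv gt u
      · have hfval : (gtW gt).f (u, j) Φ
            = gt.f u (Finset.univ.filter fun x => (x, succIdx j) ∈ Φ) := by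
          rw [gtW_f_eq, gtWf_real gt h1]
        rw [hfval] at h
        have hsub : (Finset.univ.filter fun x => (x, succIdx j) ∈ Φ) ⊆ D := by
          intro x hx
          simp only [Finset.mem_filter, Finset.mem_univ, true_and] at hx
          exact ((hPhimem _).1 hx).1
        have hθ : θ' (u, j) ≤ gt.f u D := le_trans h (gt.f_mono u hsub)
        have hj2 : j = (iota0 gt u).2 := by
          apply Fin.ext
          show j.val = reachLv gt u - 1
          have := reachLv_pos gt u
          omega
        have huj : (u, j) = iota0 gt u := by rw [hj2]; rfl
        have huD : u ∈ D := by
          apply hDfix.2 u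
          show θ' (iota0 gt u) ≤ gt.f u D
          rwa [← huj]
        exact (hPhimem _).2 ⟨huD, show j.val + 1 ≤ reachLv gt u by omega⟩
      · by_cases h2 : j.val + 1 < reachLv gt u
        · have hfval : (gtW gt).f (u, j) Φ = if (u, succIdx j) ∈ Φ then (1:ℝ) else 0 := by
            rw [gtW_f_eq, gtWf_relay gt h1 h2]
          rw [hfval] at h
          by_cases hmem : (u, succIdx j) ∈ Φ
          · have hm := (hPhimem _).1 hmem
            exact (hPhimem _).2 ⟨hm.1, show j.val + 1 ≤ reachLv gt u by omega⟩
          · rw [if_neg hmem] at h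
            have := (hgood (u, j) h1).1
            linarith
        · have hfval : (gtW gt).f (u, j) Φ = 0 := by
            rw [gtW_f_eq, gtWf_dummy gt h1 h2]
          rw [hfval] at h
          have := (hgood (u, j) h1).1
          linarith
  have hFsub : F' ⊆ Φ := finalSet_subset_of_isFixed hPhi
  have hDsub : D ⊆ Finset.univ.filter fun u => iota0 gt u ∈ F' :=
    finalSet_subset_of_isFixed hE
  constructor
  · intro hmem
    exact ((hPhimem _).1 (hFsub hmem)).1
  · intro hmem
    exact (Finset.mem_filter.1 (hDsub hmem)).2

end Key
section Transfer

lemma activationProb_W (gt : GTInstance V) (hdag : IsDAG gt) (S : Finset V) (v : V) :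
    activationProb (gtW gt) (iota0 gt v) (S.image (iota0 gt)) = activationProb gt v S := by
  unfold activationProb
  congr 1
  have hGood : cubeMeasure (V × Fin (Fintype.card V + 2))
      {θ' | ¬ ∀ p : V × Fin (Fintype.card V + 2),
        p.2.val + 1 ≠ reachLv gt p.1 → θ' p ∈ Set.Ioc (0:ℝ) 1} = 0 := by
    refine measure_mono_null ?_
      (measure_iUnion_null fun p : V × Fin (Fintype.card V + 2) => cubeMeasure_coord_null p)
    intro θ hθ
    simp only [Set.mem_setOf_eq, not_forall] at hθ
    obtain ⟨p, _, hp2⟩ := hθ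
    exact Set.mem_iUnion.2 ⟨p, hp2⟩
  have hae : {θ' | iota0 gt v ∈ finalSet (gtW gt) θ' (S.image (iota0 gt))}
      =ᵐ[cubeMeasure (V × Fin (Fintype.card V + 2))]
      ((fun θ' : V × Fin (Fintype.card V + 2) → ℝ => θ' ∘ iota0 gt) ⁻¹'
        {θ | v ∈ finalSet gt θ S}) := by
    rw [Filter.eventuallyEq_set]
    have hgood : ∀ᵐ θ' ∂(cubeMeasure (V × Fin (Fintype.card V + 2))),
        ∀ p : V × Fin (Fintype.card V + 2),
          p.2.val + 1 ≠ reachLv gt p.1 → θ' p ∈ Set.Ioc (0:ℝ) 1 := by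
      rw [MeasureTheory.ae_iff]
      exact hGood
    filter_upwards [hgood] with θ' hθ'
    exact key_iff gt hdag S θ' hθ' v
  rw [measure_congr hae,
    ← Measure.map_apply (measurable_comp_apply (iota0 gt)) (measurableSet_mem_finalSet gt S v),
    cubeMeasure_map_comp (iota0 gt) (iota0_injective gt)]

/-- Relabel a GT instance along an equivalence of vertex types. -/
def relabel {U : Type*} [Fintype U] [DecidableEq U] (g : GTInstance V) (e : V ≃ U) :
    GTInstance U where
  E a b := g.E (e.symm a) (e.symm b)
  f a A := g.f (e.symm a) (Finset.univ.filter fun w => e w ∈ A)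
  f_nonneg a A := g.f_nonneg _ _
  f_le_one a A := g.f_le_one _ _
  f_mono a := by
    intro A B hAB
    apply g.f_mono
    intro w hw
    rw [Finset.mem_filter] at hw ⊢
    exact ⟨hw.1, hAB hw.2⟩
  f_empty a := by
    have : (Finset.univ.filter fun w : V => e w ∈ (∅ : Finset U)) = ∅ := by
      ext w
      simp
    rw [this, g.f_empty]
  f_local a A := by
    rw [g.f_local (e.symm a) (Finset.univ.filter fun w => e w ∈ A)]
    congr 1
    ext w
    simp only [Finset.mem_filter, Finset.mem_univ, true_and]
    constructor
    · rintro ⟨hA, hE⟩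
      exact ⟨hA, by rw [Equiv.symm_apply_apply]; exact hE⟩
    · rintro ⟨hA, hE⟩
      rw [Equiv.symm_apply_apply] at hE
      exact ⟨hA, hE⟩

lemma relabel_f_eq {U : Type*} [Fintype U] [DecidableEq U] (g : GTInstance V) (e : V ≃ U)
    (a : U) : (relabel g e).f a = fun A => g.f (e.symm a) (Finset.univ.filter fun w => e w ∈ A) :=
  rfl

lemma relabel_cascade {U : Type*} [Fintype U] [DecidableEq U] (g : GTInstance V) (e : V ≃ U)
    (θ : U → ℝ) (A : Finset V) (t : ℕ) :
    cascade (relabel g e) θ (A.image e) t = (cascade g (θ ∘ e) A t).image e := by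
  have hf : ∀ (a : U) (C : Finset V), (relabel g e).f a (C.image e) = g.f (e.symm a) C := by
    intro a C
    rw [relabel_f_eq]
    refine congrArg (g.f (e.symm a)) ?_
    ext w
    simp only [Finset.mem_filter, Finset.mem_univ, true_and, Finset.mem_image]
    constructor
    · rintro ⟨x, hx, hxe⟩
      rwa [← e.injective hxe]
    · intro h
      exact ⟨w, h, rfl⟩
  induction t with
  | zero => rfl
  | succ t ih =>
    have hdef : cascade (relabel g e) θ (A.image e) (t + 1)
        = cascade (relabel g e) θ (A.image e) t ∪
          Finset.univ.filter (fun a => θ a ≤ (relabel g e).f a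
            (cascade (relabel g e) θ (A.image e) t)) := rfl
    have hdef2 : cascade g (θ ∘ e) A (t + 1)
        = cascade g (θ ∘ e) A t ∪
          Finset.univ.filter (fun w => (θ ∘ e) w ≤ g.f w (cascade g (θ ∘ e) A t)) := rfl
    rw [hdef, hdef2, ih, Finset.image_union]
    congr 1
    ext a
    simp only [Finset.mem_filter, Finset.mem_univ, true_and, Finset.mem_image, hf]
    constructor
    · intro h
      refine ⟨e.symm a, ?_, e.apply_symm_apply a⟩
      simpa only [Function.comp_apply, Equiv.apply_symm_apply] using h
    · rintro ⟨w, hw, rfl⟩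
      simp only [Equiv.symm_apply_apply]
      exact hw

lemma relabel_finalSet {U : Type*} [Fintype U] [DecidableEq U] (g : GTInstance V) (e : V ≃ U)
    (hcard : Fintype.card U = Fintype.card V) (θ : U → ℝ) (A : Finset V) :
    finalSet (relabel g e) θ (A.image e) = (finalSet g (θ ∘ e) A).image e := by
  unfold finalSet
  rw [relabel_cascade, hcard]

lemma relabel_activationProb {U : Type*} [Fintype U] [DecidableEq U] (g : GTInstance V)
    (e : V ≃ U) (hcard : Fintype.card U = Fintype.card V) (w : V) (A : Finset V) :
    activationProb (relabel g e) (e w) (A.image e) = activationProb g w A := by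
  unfold activationProb
  congr 1
  have hset : {θ : U → ℝ | e w ∈ finalSet (relabel g e) θ (A.image e)}
      = (fun θ : U → ℝ => θ ∘ e) ⁻¹' {θ | w ∈ finalSet g θ A} := by
    ext θ
    simp only [Set.mem_setOf_eq, Set.mem_preimage, relabel_finalSet g e hcard]
    constructor
    · intro h
      obtain ⟨x, hx, hxe⟩ := Finset.mem_image.1 h
      rwa [← e.injective hxe]
    · intro h
      exact Finset.mem_image_of_mem e h
  rw [hset, ← Measure.map_apply (measurable_comp_apply e) (measurableSet_mem_finalSet g A w),
    cubeMeasure_map_comp e e.injective]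

end Transfer

/-- Every general threshold instance on a DAG can be transformed into one on a layered
graph: there are a layered instance `gt'`, an injection `ι` of the nodes, and a node set
`T` such that (ii) local AD-`k` of `gt` implies local AD-`k` of `gt'` for every `k ≥ 1`,
and (iii) `σ(S) = ∑_{u ∈ V} P_u(S) = ∑_{u ∈ T} P'_u(ι(S))` for every seed set `S`. -/
theorem dag_to_layered_equivalent
    {V : Type*} [Fintype V] [DecidableEq V] (gt : GTInstance V) (hdag : IsDAG gt) :
    ∃ (n : ℕ) (gt' : GTInstance (Fin n)) (m : ℕ) (layer : Fin n → ℕ)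
      (ι : V → Fin n) (T : Finset (Fin n)),
      Function.Injective ι ∧ IsLayered gt' m layer ∧
      (∀ k : ℕ, 1 ≤ k → (∀ v, IsADk (gt.f v) k) → ∀ v', IsADk (gt'.f v') k) ∧
      (∀ S : Finset V, spread gt S = ∑ u ∈ T, activationProb gt' u (S.image ι)) := by
  classical
  set e := Fintype.equivFin (V × Fin (Fintype.card V + 2)) with he
  refine ⟨Fintype.card (V × Fin (Fintype.card V + 2)), relabel (gtW gt) e,
    Fintype.card V + 2, (fun a => (e.symm a).2.val + 1), fun v => e (iota0 gt v),
    Finset.univ.image (fun v => e (iota0 gt v)), ?_, ?_, ?_, ?_⟩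
  · exact fun a b h => iota0_injective gt (e.injective h)
  · refine ⟨by omega, fun a => ⟨?_, ?_⟩, fun a b h => ?_⟩
    · show 1 ≤ (e.symm a).2.val + 1
      omega
    · show (e.symm a).2.val + 1 ≤ Fintype.card V + 2
      have := (e.symm a).2.isLt
      omega
    · show (e.symm a).2.val + 1 = ((e.symm b).2.val + 1) + 1
      have h1 : (e.symm a).2.val = (e.symm b).2.val + 1 := h.1
      omega
  · intro k _ hADk v'
    have hW := gtW_adk gt k hADk (e.symm v')
    rw [gtW_f_eq] at hW
    have hfe : (relabel (gtW gt) e).f v'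
        = fun A => gtWf gt (e.symm v') (Finset.univ.filter fun w => e w ∈ A) := rfl
    rw [hfe]
    exact isADk_comp e e.injective _ k hW
  · intro S
    unfold spread
    rw [Finset.sum_image (fun a _ b _ h => iota0_injective gt (e.injective h))]
    refine Finset.sum_congr rfl fun v _ => ?_
    have himg : S.image (fun v => e (iota0 gt v)) = (S.image (iota0 gt)).image e := by
      rw [Finset.image_image]
      rfl
    rw [himg, relabel_activationProb (gtW gt) e (Fintype.card_fin _),
      activationProb_W gt hdag]

end
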